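/- arXiv:2406.01404 — 2 statements merged into one kernel-verified Lean document; each statement's English description precedes it below -/
import Mathlib

section
/- Let 𝒦 be an integral domain and F(λ) = Σ_{n≥0} a_{−n} λ^{−n} a formal power series in 𝒦[[λ^{−1}]]. Then F represents a rational function P(λ)/Q(λ) with P, Q ∈ 𝒦[λ] and deg Q ≤ N if and only if for all (N+1)-tuples of indices 1 ≤ n₁ < n₂ < … < n_{N+1}, the (N+1)×(N+1) determinant with entries a_{−n_j − i} (for i = 0, …, N and j = 1, …, N+1) vanishes. -/
/- STATEMENT 2: Hadamard's rationality criterion.  The formal power series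
F(λ) = Σ_{n≥0} a_{-n} λ^{-n} represents a rational function P/Q with
deg Q ≤ N iff there is a nonzero polynomial Q of degree ≤ N such that F·Q
has no negative powers of λ (the coefficient of λ^{-k}, k ≥ 1, of F·Q being
Σ_{i=0}^{N} a_{k+i}·(coeff of λ^i in Q)); this holds iff all the
(N+1)×(N+1) Hankel-type determinants with entries a_{n_j + i} vanish. -/

set_option maxHeartbeats 1000000 in
theorem hadamard_rationality {K : Type*} [CommRing K] [IsDomain K]
    (N : ℕ) (a : ℕ → K) :
    (∃ Q : Polynomial K, Q ≠ 0 ∧ Q.natDegree ≤ N ∧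
        ∀ k : ℕ, 1 ≤ k → ∑ i ∈ Finset.range (N + 1), a (k + i) * Q.coeff i = 0) ↔
      (∀ n : Fin (N + 1) → ℕ, StrictMono n → 1 ≤ n 0 →
        Matrix.det (Matrix.of fun i j : Fin (N + 1) => a (n j + (i : ℕ))) = 0) := by
  classical
  constructor
  · rintro ⟨Q, hQ0, hdeg, hsum⟩ n hn h1
    rw [← Matrix.exists_vecMul_eq_zero_iff]
    refine ⟨fun i => Q.coeff i, ?_, ?_⟩
    · intro h
      apply hQ0
      have hN : Q.natDegree < N + 1 := Nat.lt_succ_of_le hdeg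
      have h2 := congrFun h ⟨Q.natDegree, hN⟩
      rw [← Polynomial.leadingCoeff_eq_zero]
      exact h2
    · funext j
      have hk : 1 ≤ n j := le_trans h1 (hn.monotone (Fin.zero_le j))
      have hs := hsum (n j) hk
      rw [← Fin.sum_univ_eq_sum_range (fun i => a (n j + i) * Q.coeff i) (N + 1)] at hs
      simp only [Matrix.vecMul, dotProduct, Matrix.of_apply, Pi.zero_apply]
      rw [← hs]
      exact Finset.sum_congr rfl fun i _ => mul_comm _ _
  · intro hdet
    set L := FractionRing K with hL
    set f : K →+* L := algebraMap K L with hfdef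
    have hf : Function.Injective f := IsFractionRing.injective K L
    set w : ℕ → (Fin (N + 1) → L) := fun k i => f (a (k + 1 + (i : ℕ))) with hw
    -- Step 1: the span of the vectors `w k` is a proper subspace.
    have hspan : Submodule.span L (Set.range w) ≠ ⊤ := by
      intro htop
      obtain ⟨s, hsub, hsp, hind⟩ := exists_linearIndependent L (Set.range w)
      rw [htop] at hsp
      have hsfin : s.Finite := hind.finite
      haveI := hsfin.fintype
      have hcard : s.toFinset.card = N + 1 := by
        have h1 : Module.finrank L (Submodule.span L s) = s.toFinset.card :=
          finrank_span_set_eq_card hind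
        rw [hsp, finrank_top, Module.finrank_fin_fun] at h1
        exact h1.symm
      have hex : ∀ x ∈ s, ∃ k, w k = x := fun x hx => hsub hx
      choose! g hg using hex
      have hginj : Set.InjOn g s := fun x hx y hy hxy => by
        rw [← hg x hx, ← hg y hy, hxy]
      set t : Finset ℕ := s.toFinset.image g with htdef
      have ht : t.card = N + 1 := by
        rw [htdef, Finset.card_image_of_injOn (fun x hx y hy hxy =>
          hginj (Set.mem_toFinset.mp hx) (Set.mem_toFinset.mp hy) hxy), hcard]
      set m : Fin (N + 1) → ℕ := fun j => t.orderEmbOfFin ht j with hm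
      have hmmono : StrictMono m := (t.orderEmbOfFin ht).strictMono
      have hmem : ∀ j, w (m j) ∈ s ∧ g (w (m j)) = m j := by
        intro j
        have hmt : m j ∈ t := t.orderEmbOfFin_mem ht j
        obtain ⟨x, hx, hgx⟩ := Finset.mem_image.mp hmt
        have hxs : x ∈ s := Set.mem_toFinset.mp hx
        have hwx : w (m j) = x := by rw [← hgx, hg x hxs]
        rw [hwx]
        exact ⟨hxs, hgx⟩
      -- the family j ↦ w (m j) is linearly independent
      have hinj : Function.Injective fun j => w (m j) := by
        intro j j' hjj'
        have : m j = m j' := by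
          rw [← (hmem j).2, ← (hmem j').2]
          exact congrArg g hjj'
        exact hmmono.injective this
      have hindu : LinearIndependent L fun j => w (m j) := by
        have he : Function.Injective fun j : Fin (N + 1) =>
            (⟨w (m j), (hmem j).1⟩ : s) := fun j j' h =>
          hinj (congrArg Subtype.val h)
        exact hind.comp _ he
      -- but the determinant hypothesis forces dependence
      set n : Fin (N + 1) → ℕ := fun j => m j + 1 with hn
      have hnmono : StrictMono n := fun j j' h => by
        simp only [hn]
        exact Nat.add_lt_add_right (hmmono h) 1
      have hdK := hdet n hnmono (Nat.le_add_left 1 (m 0))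
      have hdL : ((Matrix.of fun i j : Fin (N + 1) => a (n j + (i : ℕ))).map f).det = 0 := by
        have h := RingHom.map_det f (Matrix.of fun i j : Fin (N + 1) => a (n j + (i : ℕ)))
        rw [hdK, map_zero, RingHom.mapMatrix_apply] at h
        exact h.symm
      obtain ⟨v, hv0, hv⟩ := Matrix.exists_mulVec_eq_zero_iff.mpr hdL
      have hvsum : ∑ j, v j • w (m j) = 0 := by
        funext i
        have hvi := congrFun hv i
        simp only [Matrix.mulVec, dotProduct, Matrix.map_apply, Matrix.of_apply,
          Pi.zero_apply] at hvi
        simp only [Finset.sum_apply, Pi.smul_apply, smul_eq_mul, Pi.zero_apply]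
        rw [← hvi]
        exact Finset.sum_congr rfl fun j _ => mul_comm _ _
      exact hv0 (funext (Fintype.linearIndependent_iff.mp hindu v hvsum))
    -- Step 2: get a nonzero functional vanishing on all `w k`.
    have hlt : Submodule.span L (Set.range w) < ⊤ := lt_top_iff_ne_top.mpr hspan
    obtain ⟨φ, hφ0, hφ⟩ := Submodule.exists_dual_map_eq_bot_of_lt_top hlt inferInstance
    have hφw : ∀ k, φ (w k) = 0 := by
      intro k
      have hmem : φ (w k) ∈ (Submodule.span L (Set.range w)).map φ :=
        Submodule.mem_map_of_mem (Submodule.subset_span ⟨k, rfl⟩)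
      rw [hφ, Submodule.mem_bot] at hmem
      exact hmem
    -- Step 3: the functional is given by dot product with a vector c'.
    set c' : Fin (N + 1) → L := fun i => φ (fun j => if i = j then 1 else 0) with hc'
    have hφeq : ∀ x : Fin (N + 1) → L, φ x = ∑ i, x i * c' i := by
      intro x
      rw [LinearMap.pi_apply_eq_sum_univ]
      exact Finset.sum_congr rfl fun i _ => rfl
    have hc'ne : c' ≠ 0 := by
      intro h
      apply hφ0
      apply LinearMap.ext
      intro x
      rw [hφeq]
      simp [congrFun h]
    -- Step 4: clear denominators.
    obtain ⟨b, hb⟩ :=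
      IsLocalization.exist_integer_multiples_of_finite (nonZeroDivisors K) c'
    have hb' : ∀ i, ∃ r : K, f r = (b : K) • c' i := fun i => hb i
    choose c hc using hb'
    have hbne : f (b : K) ≠ 0 := by
      intro h
      exact nonZeroDivisors.ne_zero b.2 (hf (by rw [h, map_zero]))
    have hfc : ∀ i, f (c i) = f (b : K) * c' i := by
      intro i
      rw [hc i, Algebra.smul_def]
    set Q : Polynomial K := ∑ i : Fin (N + 1), Polynomial.C (c i) * Polynomial.X ^ (i : ℕ)
      with hQ
    have hcoeff : ∀ i : Fin (N + 1), Q.coeff i = c i := by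
      intro i
      rw [hQ, Polynomial.finset_sum_coeff]
      simp only [Polynomial.coeff_C_mul, Polynomial.coeff_X_pow, mul_ite, mul_one, mul_zero]
      rw [Finset.sum_eq_single i]
      · simp
      · intro j _ hj
        simp only [ite_eq_right_iff]
        intro h
        exact absurd (Fin.val_injective h).symm hj
      · intro h
        exact absurd (Finset.mem_univ i) h
    have hcoeff2 : ∀ k : ℕ, N < k → Q.coeff k = 0 := by
      intro k hk
      rw [hQ, Polynomial.finset_sum_coeff]
      refine Finset.sum_eq_zero fun j _ => ?_
      rw [Polynomial.coeff_C_mul, Polynomial.coeff_X_pow]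
      have hjN : (j : ℕ) < N + 1 := j.isLt
      simp only [mul_ite, mul_one, mul_zero, ite_eq_right_iff]
      intro h
      exact absurd h (by omega)
    refine ⟨Q, ?_, ?_, ?_⟩
    · -- Q ≠ 0
      intro h
      apply hc'ne
      funext i
      have h1 : Q.coeff i = 0 := by rw [h]; simp
      rw [hcoeff] at h1
      have h2 : f (c i) = 0 := by rw [h1, map_zero]
      rw [hfc] at h2
      rcases mul_eq_zero.mp h2 with h3 | h3
      · exact absurd h3 hbne
      · exact h3
    · exact Polynomial.natDegree_le_iff_coeff_eq_zero.mpr hcoeff2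
    · intro k hk
      apply hf
      rw [map_zero, map_sum,
        ← Fin.sum_univ_eq_sum_range (fun i => f (a (k + i) * Q.coeff i)) (N + 1)]
      have key : ∀ i : Fin (N + 1), f (a (k + (i : ℕ)) * Q.coeff i)
          = f (b : K) * (w (k - 1) i * c' i) := by
        intro i
        rw [map_mul, hcoeff, hfc]
        have : w (k - 1) i = f (a (k + (i : ℕ))) := by
          simp only [hw]
          congr 2
          omega
        rw [this]
        ring
      rw [Finset.sum_congr rfl fun i _ => key i, ← Finset.mul_sum, ← hφeq, hφw, mul_zero]
end

section
/- Let 𝒳 be a complex Hilbert manifold, f : 𝒳 ⇢ ℙ(ℓ²) a meromorphic map with indeterminacy set I of codimension ≥ 2, and φ : Δ → 𝒳 a holomorphic map from the unit disc whose image is not contained in I. Then f ∘ φ, which is holomorphic on Δ \ φ⁻¹(I), extends holomorphically across every point of the discrete set φ⁻¹(I), i.e. f restricted to any complex curve not contained in I extends to a holomorphic map of the curve into ℙ(ℓ²). -/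
noncomputable section
open Set Metric

/-- The model separable Hilbert space ℓ². -/
abbrev EllTwo : Type := lp (fun _ : ℕ => ℂ) 2

/-- A meromorphic function on an open subset `U` of a complex normed space:
locally a quotient `h/g` of holomorphic functions with `g ≢ 0`. -/
def MeromorphicOnSet {E : Type*} [NormedAddCommGroup E] [NormedSpace ℂ E]
    (f : E → ℂ) (U : Set E) : Prop :=
  ∀ a ∈ U, ∃ V : Set E, IsOpen V ∧ a ∈ V ∧ V ⊆ U ∧ ∃ h g : E → ℂ,
    DifferentiableOn ℂ h V ∧ DifferentiableOn ℂ g V ∧ (∃ z ∈ V, g z ≠ 0) ∧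
    ∀ z ∈ V, g z ≠ 0 → f z = h z / g z

/-- A Hilbert analytic subset of an open set `U`: locally the zero set of a
holomorphic map with values in a separable complex Hilbert space. -/
def IsHilbertAnalyticIn {E : Type*} [NormedAddCommGroup E] [NormedSpace ℂ E]
    (A U : Set E) : Prop :=
  A ⊆ U ∧ ∀ a ∈ U, ∃ V : Set E, IsOpen V ∧ a ∈ V ∧ V ⊆ U ∧
    ∃ h : E → EllTwo, DifferentiableOn ℂ h V ∧ A ∩ V = {z ∈ V | h z = 0}

/-- The germ of `A` at `a` has codimension at least `p`: there is a
`p`-dimensional linear subspace `T` such that, locally near `a`, the affine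
subspace `a + T` meets `A` only at `a`. -/
def GermCodimAtLeast {E : Type*} [NormedAddCommGroup E] [NormedSpace ℂ E]
    (A : Set E) (a : E) (p : ℕ) : Prop :=
  ∃ T : Submodule ℂ E, Module.finrank ℂ T = p ∧ ∃ V : Set E, IsOpen V ∧ a ∈ V ∧
    ∀ z ∈ A ∩ V, z - a ∈ (T : Set E) → z = a

/-- `A` contains a principal germ at `a`: the germ of the zero set of a single
holomorphic function vanishing at `a` (and not identically zero) is contained
in `A`. -/
def ContainsPrincipalGermAt {E : Type*} [NormedAddCommGroup E] [NormedSpace ℂ E]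
    (A : Set E) (a : E) : Prop :=
  ∃ V : Set E, IsOpen V ∧ a ∈ V ∧ ∃ f : E → ℂ,
    DifferentiableOn ℂ f V ∧ f a = 0 ∧ (∃ z ∈ V, f z ≠ 0) ∧
    ∃ W : Set E, IsOpen W ∧ a ∈ W ∧ W ⊆ V ∧ {z ∈ W | f z = 0} ⊆ A

/- STATEMENT 18: a meromorphic map f : 𝒳 ⇢ ℙ(ℓ²) (holomorphic off an
analytic set I of codimension ≥ 2, locally lifting through π : ℓ²\{0} → ℙ(ℓ²))
restricted to a complex disc φ : Δ → 𝒳 not contained in I extends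
holomorphically across the (discrete) set φ⁻¹(I). -/

abbrev PEllTwo := Projectivization ℂ EllTwo

set_option maxHeartbeats 1000000 in
set_option synthInstance.maxHeartbeats 400000 in
theorem restriction_to_curves_extends
    {E : Type*} [NormedAddCommGroup E] [InnerProductSpace ℂ E] [CompleteSpace E]
    [TopologicalSpace.SeparableSpace E]
    (U : Set E) (hU : IsOpen U)
    (I : Set E) (hI : IsHilbertAnalyticIn I U)
    (hcodim : ∀ a ∈ I, GermCodimAtLeast I a 2)
    (f : E → PEllTwo)
    -- f is a meromorphic map: local holomorphic lifts F with f = π ∘ F off I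
    (hf : ∀ a ∈ U, ∃ V : Set E, IsOpen V ∧ a ∈ V ∧ V ⊆ U ∧
      ∃ F : E → EllTwo, DifferentiableOn ℂ F V ∧
        ∀ z ∈ V \ I, ∃ hz : F z ≠ 0, f z = Projectivization.mk ℂ (F z) hz)
    (φ : ℂ → E) (hφ : DifferentiableOn ℂ φ (Metric.ball (0:ℂ) 1))
    (hφU : ∀ lam ∈ Metric.ball (0:ℂ) 1, φ lam ∈ U)
    (hni : ¬ (φ '' Metric.ball (0:ℂ) 1 ⊆ I)) :
    -- φ⁻¹(I) is discrete in Δ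
    (∀ lam₀ ∈ Metric.ball (0:ℂ) 1, φ lam₀ ∈ I →
      ∃ W ∈ nhds lam₀, ∀ lam ∈ W, lam ≠ lam₀ → φ lam ∉ I) ∧
    -- f ∘ φ extends to a holomorphic map of the disc into ℙ(ℓ²)
    ∃ g : ℂ → PEllTwo,
      (∀ lam ∈ Metric.ball (0:ℂ) 1, φ lam ∉ I → g lam = f (φ lam)) ∧
      ∀ lam₀ ∈ Metric.ball (0:ℂ) 1, ∃ W : Set ℂ, IsOpen W ∧ lam₀ ∈ W ∧
        ∃ G : ℂ → EllTwo, DifferentiableOn ℂ G W ∧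
          ∀ lam ∈ W ∩ Metric.ball (0:ℂ) 1,
            ∃ hlam : G lam ≠ 0, g lam = Projectivization.mk ℂ (G lam) hlam := by
  
  classical
  have hΔo : IsOpen (Metric.ball (0:ℂ) 1) := isOpen_ball
  have hφc : ContinuousOn φ (Metric.ball (0:ℂ) 1) := hφ.continuousOn
  -- Step 0: the set where φ locally maps into I is empty
  have step0 : ∀ lam ∈ Metric.ball (0:ℂ) 1, ¬ (∀ᶠ mu in nhds lam, φ mu ∈ I) := by
    set S : Set ℂ := {lam | lam ∈ Metric.ball (0:ℂ) 1 ∧ ∀ᶠ mu in nhds lam, φ mu ∈ I} with hSdef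
    have hclos : ∀ lam ∈ Metric.ball (0:ℂ) 1, lam ∈ closure S → lam ∈ S := by
      intro lam hlam hcl
      obtain ⟨V, hVo, haV, hVU, h, hhd, hIV⟩ := hI.2 (φ lam) (hφU lam hlam)
      have hNo : IsOpen (Metric.ball (0:ℂ) 1 ∩ φ ⁻¹' V) :=
        hφc.isOpen_inter_preimage hΔo hVo
      obtain ⟨r, hr0, hrN⟩ := Metric.isOpen_iff.1 hNo lam ⟨hlam, haV⟩
      obtain ⟨lam₁, hlam₁b, hlam₁S⟩ :=
        mem_closure_iff.1 hcl (Metric.ball lam r) isOpen_ball (mem_ball_self hr0)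
      have hcomp : DifferentiableOn ℂ (fun mu => h (φ mu))
          (Metric.ball (0:ℂ) 1 ∩ φ ⁻¹' V) :=
        hhd.comp (hφ.mono inter_subset_left) (fun x hx => hx.2)
      have han : AnalyticOnNhd ℂ (fun mu => h (φ mu)) (Metric.ball lam r) :=
        (hcomp.mono hrN).analyticOnNhd isOpen_ball
      have hev : (fun mu => h (φ mu)) =ᶠ[nhds lam₁] 0 := by
        filter_upwards [hlam₁S.2, hNo.mem_nhds (hrN hlam₁b)] with mu hmuI hmuN
        have hm : φ mu ∈ I ∩ V := ⟨hmuI, hmuN.2⟩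
        rw [hIV] at hm
        exact hm.2
      have hEq : EqOn (fun mu => h (φ mu)) 0 (Metric.ball lam r) :=
        han.eqOn_zero_of_preconnected_of_eventuallyEq_zero
          (convex_ball lam r).isPreconnected hlam₁b hev
      refine ⟨hlam, ?_⟩
      filter_upwards [isOpen_ball.mem_nhds (mem_ball_self hr0)] with mu hmu
      have hm : φ mu ∈ I ∩ V := by
        rw [hIV]
        exact ⟨(hrN hmu).2, hEq hmu⟩
      exact hm.1
    intro lam hlam hev
    obtain ⟨x, hxΔ, hxI⟩ : ∃ x ∈ Metric.ball (0:ℂ) 1, φ x ∉ I := by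
      by_contra hcon
      push_neg at hcon
      exact hni (fun y hy => by obtain ⟨x, hx, rfl⟩ := hy; exact hcon x hx)
    have hxnc : x ∉ closure S := fun hcc => hxI ((hclos x hxΔ hcc).2.self_of_nhds)
    have hpre : IsPreconnected (Metric.ball (0:ℂ) 1) :=
      (convex_ball (0:ℂ) 1).isPreconnected
    have hu : IsOpen {lam : ℂ | ∀ᶠ mu in nhds lam, φ mu ∈ I} :=
      isOpen_setOf_eventually_nhds
    obtain ⟨y, hyΔ, hyu, hyv⟩ := hpre _ _ hu (isOpen_compl_iff.2 isClosed_closure)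
      (fun z hz => by
        by_cases hzc : z ∈ closure S
        · exact Or.inl (hclos z hz hzc).2
        · exact Or.inr hzc)
      ⟨lam, hlam, hev⟩ ⟨x, hxΔ, hxnc⟩
    exact hyv (subset_closure ⟨hyΔ, hyu⟩)
  -- Step 1: discreteness of φ⁻¹(I)
  have step1 : ∀ lam₀ ∈ Metric.ball (0:ℂ) 1, φ lam₀ ∈ I →
      ∀ᶠ lam in nhdsWithin lam₀ {lam₀}ᶜ, φ lam ∉ I := by
    intro lam₀ hlam₀ hlamI
    obtain ⟨V, hVo, haV, hVU, h, hhd, hIV⟩ := hI.2 (φ lam₀) (hφU lam₀ hlam₀)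
    have hNo : IsOpen (Metric.ball (0:ℂ) 1 ∩ φ ⁻¹' V) :=
      hφc.isOpen_inter_preimage hΔo hVo
    have hN : (Metric.ball (0:ℂ) 1 ∩ φ ⁻¹' V) ∈ nhds lam₀ := hNo.mem_nhds ⟨hlam₀, haV⟩
    have hcomp : DifferentiableOn ℂ (fun mu => h (φ mu))
        (Metric.ball (0:ℂ) 1 ∩ φ ⁻¹' V) :=
      hhd.comp (hφ.mono inter_subset_left) (fun x hx => hx.2)
    have han : AnalyticAt ℂ (fun mu => h (φ mu)) lam₀ := hcomp.analyticAt hN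
    rcases han.eventually_eq_zero_or_eventually_ne_zero with hz | hnz
    · exfalso
      apply step0 lam₀ hlam₀
      filter_upwards [hz, hN] with mu h0 hmuN
      have hm : φ mu ∈ I ∩ V := by
        rw [hIV]
        exact ⟨hmuN.2, h0⟩
      exact hm.1
    · filter_upwards [hnz, nhdsWithin_le_nhds hN] with mu h0 hmuN hmuI
      have hm : φ mu ∈ I ∩ V := ⟨hmuI, hmuN.2⟩
      rw [hIV] at hm
      exact h0 hm.2
  have disc : ∀ lam₀ ∈ Metric.ball (0:ℂ) 1, φ lam₀ ∈ I →
      ∃ W ∈ nhds lam₀, ∀ lam ∈ W, lam ≠ lam₀ → φ lam ∉ I := by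
    intro lam₀ h1 h2
    have h3 := step1 lam₀ h1 h2
    rw [eventually_nhdsWithin_iff] at h3
    obtain ⟨W, hW, hWs⟩ := Filter.eventually_iff_exists_mem.1 h3
    exact ⟨W, hW, fun lam hl hne => hWs lam hl hne⟩
  -- Key lemma: local nonvanishing holomorphic lift at points of φ⁻¹(I)
  have key : ∀ lam₀, lam₀ ∈ Metric.ball (0:ℂ) 1 → φ lam₀ ∈ I →
      ∃ W : Set ℂ, ∃ H : ℂ → EllTwo, IsOpen W ∧ lam₀ ∈ W ∧ W ⊆ Metric.ball (0:ℂ) 1 ∧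
        DifferentiableOn ℂ H W ∧ (∀ lam ∈ W, H lam ≠ 0) ∧
        ∀ lam ∈ W, lam ≠ lam₀ → φ lam ∉ I ∧
          ∀ hne : H lam ≠ 0, f (φ lam) = Projectivization.mk ℂ (H lam) hne := by
    intro lam₀ h1 h2
    obtain ⟨V, hVo, haV, hVU, F, hFd, hFs⟩ := hf (φ lam₀) (hφU lam₀ h1)
    have hNo : IsOpen (Metric.ball (0:ℂ) 1 ∩ φ ⁻¹' V) :=
      hφc.isOpen_inter_preimage hΔo hVo
    have hN : (Metric.ball (0:ℂ) 1 ∩ φ ⁻¹' V) ∈ nhds lam₀ := hNo.mem_nhds ⟨h1, haV⟩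
    have hGd : DifferentiableOn ℂ (fun mu => F (φ mu))
        (Metric.ball (0:ℂ) 1 ∩ φ ⁻¹' V) :=
      hFd.comp (hφ.mono inter_subset_left) (fun x hx => hx.2)
    have hGa : AnalyticAt ℂ (fun mu => F (φ mu)) lam₀ := hGd.analyticAt hN
    have hpunct : ∀ᶠ mu in nhdsWithin lam₀ {lam₀}ᶜ,
        φ mu ∉ I ∧ F (φ mu) ≠ 0 ∧
          ∀ hne : F (φ mu) ≠ 0, f (φ mu) = Projectivization.mk ℂ (F (φ mu)) hne := by
      filter_upwards [step1 lam₀ h1 h2, nhdsWithin_le_nhds hN] with mu hmuI hmuN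
      obtain ⟨hz, hfz⟩ := hFs (φ mu) ⟨hmuN.2, hmuI⟩
      exact ⟨hmuI, hz, fun hne => hfz⟩
    have hord : analyticOrderAt (fun mu => F (φ mu)) lam₀ ≠ ⊤ := by
      intro htop
      rw [analyticOrderAt_eq_top] at htop
      obtain ⟨mu, ⟨_, hne, _⟩, h0⟩ := (hpunct.and (nhdsWithin_le_nhds htop)).exists
      exact hne h0
    obtain ⟨n, hn⟩ := WithTop.ne_top_iff_exists.1 hord
    obtain ⟨H, hHa, hH0, hGeq⟩ := (hGa.analyticOrderAt_eq_natCast (n := n)).1 hn.symm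
    have e1 : ∀ᶠ mu in nhds lam₀, AnalyticAt ℂ H mu := hHa.eventually_analyticAt
    have e2 : ∀ᶠ mu in nhds lam₀, H mu ≠ 0 := hHa.continuousAt.eventually_ne hH0
    have e5 : ∀ᶠ mu in nhds lam₀, mu ≠ lam₀ →
        (φ mu ∉ I ∧ F (φ mu) ≠ 0 ∧
          ∀ hne : F (φ mu) ≠ 0, f (φ mu) = Projectivization.mk ℂ (F (φ mu)) hne) := by
      have h4 := hpunct
      rw [eventually_nhdsWithin_iff] at h4
      filter_upwards [h4] with mu hmu hmune
      exact hmu hmune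
    have big := (e1.and (e2.and (hGeq.and e5))).and hN
    obtain ⟨W, hWsub, hWo, hWmem⟩ := _root_.eventually_nhds_iff.1 big
    refine ⟨W, H, hWo, hWmem, fun x hx => (hWsub x hx).2.1,
      fun x hx => ((hWsub x hx).1.1).differentiableAt.differentiableWithinAt,
      fun x hx => (hWsub x hx).1.2.1, ?_⟩
    intro lam hlam hne
    obtain ⟨⟨hHan, hHne, hGeql, hPl⟩, hlN⟩ := hWsub lam hlam
    obtain ⟨hnI, hFne, hfeq⟩ := hPl hne
    refine ⟨hnI, ?_⟩
    intro hneH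
    rw [hfeq hFne, Projectivization.mk_eq_mk_iff]
    refine ⟨Units.mk0 ((lam - lam₀) ^ n) (pow_ne_zero n (sub_ne_zero.2 hne)), ?_⟩
    rw [Units.smul_def, Units.val_mk0]
    exact hGeql.symm
  choose Wc Hc hWo hWm hWΔ hWd hWne hWspec using key
  refine ⟨disc, fun lam => if hc : lam ∈ Metric.ball (0:ℂ) 1 ∧ φ lam ∈ I
      then Projectivization.mk ℂ (Hc lam hc.1 hc.2 lam)
        (hWne lam hc.1 hc.2 lam (hWm lam hc.1 hc.2))
      else f (φ lam), ?_, ?_⟩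
  · intro lam hlam hnI
    dsimp only
    rw [dif_neg (by rintro ⟨_, hh⟩; exact hnI hh)]
  · intro lam₀ hlam₀
    by_cases hc : φ lam₀ ∈ I
    · refine ⟨Wc lam₀ hlam₀ hc, hWo lam₀ hlam₀ hc, hWm lam₀ hlam₀ hc, Hc lam₀ hlam₀ hc,
        hWd lam₀ hlam₀ hc, ?_⟩
      rintro lam ⟨hlW, hlΔ⟩
      refine ⟨hWne lam₀ hlam₀ hc lam hlW, ?_⟩
      by_cases hee : lam = lam₀
      · subst hee
        dsimp only
        rw [dif_pos ⟨hlam₀, hc⟩]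
      · have hsp := hWspec lam₀ hlam₀ hc lam hlW hee
        dsimp only
        rw [dif_neg (fun hcc => hsp.1 hcc.2)]
        exact hsp.2 _
    · obtain ⟨V, hVo, haV, hVU, F, hFd, hFs⟩ := hf (φ lam₀) (hφU lam₀ hlam₀)
      obtain ⟨V', hV'o, haV', hV'U, h, hhd, hIV⟩ := hI.2 (φ lam₀) (hφU lam₀ hlam₀)
      have hO : IsOpen (V' ∩ h ⁻¹' ({0}ᶜ)) :=
        hhd.continuousOn.isOpen_inter_preimage hV'o isOpen_compl_singleton
      have hWo' : IsOpen (Metric.ball (0:ℂ) 1 ∩ φ ⁻¹' (V ∩ (V' ∩ h ⁻¹' ({0}ᶜ)))) :=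
        hφc.isOpen_inter_preimage hΔo (hVo.inter hO)
      have hh0 : h (φ lam₀) ∈ ({0}ᶜ : Set EllTwo) := by
        intro h0
        have hm : φ lam₀ ∈ I ∩ V' := by
          rw [hIV]
          exact ⟨haV', h0⟩
        exact hc hm.1
      refine ⟨_, hWo', ⟨hlam₀, haV, haV', hh0⟩, fun mu => F (φ mu),
        hFd.comp (hφ.mono inter_subset_left) (fun x hx => hx.2.1), ?_⟩
      rintro lam ⟨⟨hlΔ, hlV, hlV', hlh⟩, _⟩
      have hlnI : φ lam ∉ I := by
        intro hIl
        have hm : φ lam ∈ I ∩ V' := ⟨hIl, hlV'⟩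
        rw [hIV] at hm
        exact hlh hm.2
      obtain ⟨hz, hfz⟩ := hFs (φ lam) ⟨hlV, hlnI⟩
      refine ⟨hz, ?_⟩
      dsimp only
      rw [dif_neg (fun hcc => hlnI hcc.2)]
      exact hfz
end
end
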